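/- arXiv:1511.07903 — 2 statements merged into one kernel-verified Lean document; each statement's English description precedes it below -/
import Mathlib

section
/- Let K independent homogeneous PPPs Φ_1,…,Φ_K on ℝ² have intensities λ_1,…,λ_K, with positive weights τ_1,…,τ_K. Let R_j be the distance from the origin to the nearest point of Φ_j. Then the probability that the i-th tier minimizes the weighted distance, P(τ_i R_i ≤ τ_j R_j for all j ≠ i), equals λ_i / (Σ_{j=1}^K (τ_i²/τ_j²) λ_j). -/
/-!
Each `R_j` is Rayleigh distributed: its law has density `2 a r exp(-a r²)` on `r > 0` with
`a = π λ_j`, so `ℙ(R_j ≥ r) = exp(-π λ_j r²)`. Conditionally on `R_i = x`, tier `i` wins with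
probability `∏_{j ≠ i} ℙ(R_j ≥ τ_i x / τ_j) = exp(-b x²)`, `b = π ∑_{j ≠ i} (τ_i / τ_j)² λ_j`.
Integrating against the density of `R_i` gives `a / (a + b)`, because
`2 a x exp(-a x²) exp(-b x²)` is `a / (a + b)` times the Rayleigh density with parameter `a + b`.
-/

open MeasureTheory ProbabilityTheory Real Set Filter Topology
open scoped ENNReal

noncomputable def rayleighDensity (a : ℝ) : ℝ → ℝ≥0∞ :=
  (Ioi 0).indicator fun r => ENNReal.ofReal (2 * a * r * exp (-(a * r ^ 2)))

section Rayleigh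

variable {a : ℝ}

lemma measurable_rayleighDensity : Measurable (rayleighDensity a) :=
  Measurable.indicator (by fun_prop) measurableSet_Ioi

lemma rayleighDensity_of_pos {r : ℝ} (hr : 0 < r) :
    rayleighDensity a r = ENNReal.ofReal (2 * a * r * exp (-(a * r ^ 2))) :=
  indicator_of_mem hr _

lemma rayleighDensity_of_nonpos {r : ℝ} (hr : r ≤ 0) : rayleighDensity a r = 0 :=
  indicator_of_notMem (not_lt.2 hr) _

lemma hasDerivAt_neg_exp_neg_mul_sq (r : ℝ) :
    HasDerivAt (fun r => -exp (-(a * r ^ 2))) (2 * a * r * exp (-(a * r ^ 2))) r := by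
  have h : HasDerivAt (fun r => -(a * r ^ 2)) (-(a * (2 * r))) r :=
    (by simpa using (hasDerivAt_pow 2 r).const_mul a : HasDerivAt (fun r => a * r ^ 2) _ r).neg
  exact h.exp.neg.congr_deriv (by ring)

lemma tendsto_neg_exp_neg_mul_sq_atTop (ha : 0 < a) :
    Tendsto (fun r => -exp (-(a * r ^ 2))) atTop (𝓝 0) := by
  have h : Tendsto (fun r : ℝ => -(a * r ^ 2)) atTop atBot :=
    tendsto_neg_atBot_iff.2 ((tendsto_pow_atTop two_ne_zero).const_mul_atTop ha)
  simpa using (tendsto_exp_atBot.comp h).neg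

lemma setLIntegral_Ioi_rayleighDensity (ha : 0 < a) {c : ℝ} (hc : 0 ≤ c) :
    ∫⁻ r in Ioi c, rayleighDensity a r = ENNReal.ofReal (exp (-(a * c ^ 2))) := by
  have hderiv : ∀ x ∈ Ici c, HasDerivAt (fun r => -exp (-(a * r ^ 2)))
      (2 * a * x * exp (-(a * x ^ 2))) x := fun x _ => hasDerivAt_neg_exp_neg_mul_sq x
  have hnonneg : ∀ x ∈ Ioi c, 0 ≤ 2 * a * x * exp (-(a * x ^ 2)) := fun x hx => by
    have : 0 < x := hc.trans_lt hx
    positivity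
  have hlim := tendsto_neg_exp_neg_mul_sq_atTop ha
  rw [setLIntegral_congr_fun measurableSet_Ioi fun r hr => rayleighDensity_of_pos (hc.trans_lt hr),
    ← ofReal_integral_eq_lintegral_ofReal (integrableOn_Ioi_deriv_of_nonneg' hderiv hnonneg hlim)
      (ae_restrict_of_forall_mem measurableSet_Ioi hnonneg),
    integral_Ioi_of_hasDerivAt_of_nonneg' hderiv hnonneg hlim]
  simp

lemma lintegral_rayleighDensity (ha : 0 < a) : ∫⁻ r, rayleighDensity a r = 1 := by
  rw [← setLIntegral_eq_of_support_subset (f := rayleighDensity a) (s := Ioi 0)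
      support_indicator_subset,
    setLIntegral_Ioi_rayleighDensity ha le_rfl]
  simp

lemma setLIntegral_Iic_rayleighDensity (ha : 0 < a) {b : ℝ} (hb : 0 ≤ b) :
    ∫⁻ r in Iic b, rayleighDensity a r = ENNReal.ofReal (1 - exp (-(a * b ^ 2))) := by
  have h := lintegral_add_compl (μ := volume) (rayleighDensity a) (measurableSet_Iic (a := b))
  rw [compl_Iic, setLIntegral_Ioi_rayleighDensity ha hb, lintegral_rayleighDensity ha] at h
  rw [ENNReal.eq_sub_of_add_eq ENNReal.ofReal_ne_top h, ENNReal.ofReal_sub _ (exp_pos _).le,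
    ENNReal.ofReal_one]

lemma ae_pos_withDensity_rayleighDensity :
    ∀ᵐ x ∂volume.withDensity (rayleighDensity a), 0 < x :=
  (ae_withDensity_iff measurable_rayleighDensity).2 <| ae_of_all _ fun _ hx =>
    not_le.1 fun h => hx (rayleighDensity_of_nonpos h)

lemma rayleighDensity_mul_exp (ha : 0 ≤ a) {b : ℝ} (hab : 0 < a + b) (x : ℝ) :
    rayleighDensity a x * ENNReal.ofReal (exp (-(b * x ^ 2)))
      = ENNReal.ofReal (a / (a + b)) * rayleighDensity (a + b) x := by
  rcases lt_or_ge 0 x with hx | hx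
  · rw [rayleighDensity_of_pos hx, rayleighDensity_of_pos hx, ← ENNReal.ofReal_mul (by positivity),
      ← ENNReal.ofReal_mul (by positivity)]
    congr 1
    field_simp
    rw [mul_assoc, ← exp_add]
    ring_nf
  · simp [rayleighDensity_of_nonpos hx]

lemma lintegral_rayleighDensity_mul_exp (ha : 0 < a) {b : ℝ} (hb : 0 ≤ b) :
    ∫⁻ x, rayleighDensity a x * ENNReal.ofReal (exp (-(b * x ^ 2)))
      = ENNReal.ofReal (a / (a + b)) := by
  simp_rw [rayleighDensity_mul_exp ha.le (by positivity : 0 < a + b)]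
  rw [lintegral_const_mul _ measurable_rayleighDensity,
    lintegral_rayleighDensity (by positivity), mul_one]

end Rayleigh

section Law

variable {Ω : Type*} [MeasurableSpace Ω] {μ : Measure Ω} {X : Ω → ℝ} {a : ℝ}

lemma map_eq_withDensity_rayleighDensity [IsFiniteMeasure μ] (hX : Measurable X) (ha : 0 < a)
    (hcdf : ∀ r, 0 ≤ r → μ {ω | X ω ≤ r} = ENNReal.ofReal (1 - exp (-(a * r ^ 2)))) :
    μ.map X = volume.withDensity (rayleighDensity a) := by
  refine Measure.ext_of_Iic _ _ fun b => ?_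
  rw [Measure.map_apply hX measurableSet_Iic, withDensity_apply _ measurableSet_Iic]
  rcases le_or_gt 0 b with hb | hb
  · exact (hcdf b hb).trans (setLIntegral_Iic_rayleighDensity ha hb).symm
  · have hX0 : μ {ω | X ω ≤ 0} = 0 := by simp [hcdf 0 le_rfl]
    have hρ0 : ∫⁻ r in Iic b, rayleighDensity a r = 0 :=
      setLIntegral_eq_zero_iff measurableSet_Iic measurable_rayleighDensity |>.2 <|
        ae_of_all _ fun r hr => rayleighDensity_of_nonpos (hr.trans hb.le)
    rw [hρ0]
    exact measure_mono_null (fun ω hω => le_trans hω hb.le) hX0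

lemma measure_le_eq_exp_of_map_eq_withDensity (hX : Measurable X) (ha : 0 < a)
    (hlaw : μ.map X = volume.withDensity (rayleighDensity a)) {c : ℝ} (hc : 0 ≤ c) :
    μ {ω | c ≤ X ω} = ENNReal.ofReal (exp (-(a * c ^ 2))) := by
  rw [← setLIntegral_Ioi_rayleighDensity ha hc, setLIntegral_congr Ioi_ae_eq_Ici,
    ← withDensity_apply _ measurableSet_Ici, ← hlaw, Measure.map_apply hX measurableSet_Ici]
  rfl

end Law

namespace ProbabilityTheory

variable {Ω : Type*} [MeasurableSpace Ω] {μ : Measure Ω}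

lemma IndepFun.measure_preimage_eq_lintegral [IsFiniteMeasure μ] {α β : Type*}
    [MeasurableSpace α] [MeasurableSpace β]
    {X : Ω → α} {Y : Ω → β} (hXY : IndepFun X Y μ) (hX : Measurable X) (hY : Measurable Y)
    {C : Set (α × β)} (hC : MeasurableSet C) :
    μ ((fun ω => (X ω, Y ω)) ⁻¹' C) = ∫⁻ x, μ (Y ⁻¹' (Prod.mk x ⁻¹' C)) ∂μ.map X := by
  rw [← Measure.map_apply (hX.prodMk hY) hC,
    (indepFun_iff_map_prod_eq_prod_map_map hX.aemeasurable hY.aemeasurable).1 hXY,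
    Measure.prod_apply hC]
  exact lintegral_congr fun x => Measure.map_apply hY (measurable_prodMk_left hC)

variable {ι : Type*} {R : ι → Ω → ℝ}

lemma iIndepFun.measure_forall_mul_le_eq_lintegral [IsFiniteMeasure μ] [DecidableEq ι]
    (hR : iIndepFun R μ) (hmeas : ∀ j, Measurable (R j)) {i : ι} {T : Finset ι} (hi : i ∉ T)
    (c : ι → ℝ) :
    μ {ω | ∀ j ∈ T, c j * R i ω ≤ R j ω}
      = ∫⁻ x, μ {ω | ∀ j ∈ T, c j * x ≤ R j ω} ∂μ.map (R i) := by
  let Y : Ω → T → ℝ := fun ω j => R j ω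
  let C : Set (ℝ × (T → ℝ)) := ⋂ j : T, {p | c j * p.1 ≤ p.2 j}
  have hC : MeasurableSet C := MeasurableSet.iInter fun j =>
    measurableSet_le (measurable_fst.const_mul _) ((measurable_pi_apply j).comp measurable_snd)
  have hXY : IndepFun (R i) Y μ :=
    (hR.indepFun_finset {i} T (Finset.disjoint_singleton_left.2 hi) hmeas).comp
      (measurable_pi_apply (⟨i, Finset.mem_singleton_self i⟩ : ({i} : Finset ι))) measurable_id
  convert hXY.measure_preimage_eq_lintegral (hmeas i) (measurable_pi_lambda _ fun j => hmeas j)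
    hC using 1
  · congr 1
    ext ω
    simp [C, Y]
  · refine lintegral_congr fun x => congr_arg μ ?_
    ext ω
    simp [C, Y]

lemma iIndepFun.measure_forall_mul_le_eq_exp (hR : iIndepFun R μ) (hmeas : ∀ j, Measurable (R j))
    {T : Finset ι} {a c : ι → ℝ} (ha : ∀ j ∈ T, 0 < a j)
    (hlaw : ∀ j ∈ T, μ.map (R j) = volume.withDensity (rayleighDensity (a j)))
    (hc : ∀ j ∈ T, 0 ≤ c j) {x : ℝ} (hx : 0 ≤ x) :
    μ {ω | ∀ j ∈ T, c j * x ≤ R j ω}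
      = ENNReal.ofReal (exp (-((∑ j ∈ T, a j * c j ^ 2) * x ^ 2))) := by
  have hset : {ω | ∀ j ∈ T, c j * x ≤ R j ω} = ⋂ j ∈ T, {ω | c j * x ≤ R j ω} := by
    ext ω; simp
  rw [hset, hR.meas_biInter (s := fun j => {ω | c j * x ≤ R j ω})
      fun j _ => ⟨Ici _, measurableSet_Ici, rfl⟩,
    Finset.prod_congr rfl fun j hj => measure_le_eq_exp_of_map_eq_withDensity (hmeas j) (ha j hj)
      (hlaw j hj) (mul_nonneg (hc j hj) hx),
    ← ENNReal.ofReal_prod_of_nonneg fun _ _ => (exp_pos _).le, ← exp_sum, Finset.sum_mul,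
    ← Finset.sum_neg_distrib]
  congr 3 with j
  ring

lemma iIndepFun.measure_forall_mul_le_eq_div [IsFiniteMeasure μ] [DecidableEq ι]
    (hR : iIndepFun R μ) (hmeas : ∀ j, Measurable (R j)) {a c : ι → ℝ} (ha : ∀ j, 0 < a j)
    (hlaw : ∀ j, μ.map (R j) = volume.withDensity (rayleighDensity (a j)))
    {i : ι} {T : Finset ι} (hi : i ∉ T) (hc : ∀ j ∈ T, 0 ≤ c j) :
    μ {ω | ∀ j ∈ T, c j * R i ω ≤ R j ω}
      = ENNReal.ofReal (a i / (a i + ∑ j ∈ T, a j * c j ^ 2)) := by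
  calc μ {ω | ∀ j ∈ T, c j * R i ω ≤ R j ω}
      = ∫⁻ x, μ {ω | ∀ j ∈ T, c j * x ≤ R j ω} ∂μ.map (R i) :=
        hR.measure_forall_mul_le_eq_lintegral hmeas hi c
    _ = ∫⁻ x, ENNReal.ofReal (exp (-((∑ j ∈ T, a j * c j ^ 2) * x ^ 2))) ∂μ.map (R i) := by
        rw [hlaw i]
        exact lintegral_congr_ae <| ae_pos_withDensity_rayleighDensity.mono fun x hx =>
          hR.measure_forall_mul_le_eq_exp hmeas (fun j _ => ha j) (fun j _ => hlaw j) hc hx.le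
    _ = ENNReal.ofReal (a i / (a i + ∑ j ∈ T, a j * c j ^ 2)) := by
        rw [hlaw i, lintegral_withDensity_eq_lintegral_mul _ measurable_rayleighDensity
          (by fun_prop)]
        exact lintegral_rayleighDensity_mul_exp (ha i)
          (Finset.sum_nonneg fun j _ => mul_nonneg (ha j).le (sq_nonneg _))

end ProbabilityTheory

theorem stmt1_general
    {Ω : Type*} [MeasureSpace Ω] [IsProbabilityMeasure (ℙ : Measure Ω)]
    {K : ℕ}
    (lam τ : Fin K → ℝ) (hlam : ∀ j, 0 < lam j) (hτ : ∀ j, 0 < τ j)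
    (R : Fin K → Ω → ℝ)
    (hmeas : ∀ j, Measurable (R j))
    (hindep : iIndepFun R ℙ)
    (hcdf : ∀ j, ∀ r : ℝ, 0 ≤ r →
      ℙ {ω | R j ω ≤ r} = ENNReal.ofReal (1 - Real.exp (-(π * lam j * r ^ 2))))
    (i : Fin K) :
    ℙ {ω | ∀ j, j ≠ i → τ i * R i ω ≤ τ j * R j ω}
      = ENNReal.ofReal (lam i / ∑ j, (τ i) ^ 2 / (τ j) ^ 2 * lam j) := by
  have ha : ∀ j, 0 < π * lam j := fun j => mul_pos pi_pos (hlam j)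
  have hlaw : ∀ j, Measure.map (R j) ℙ = volume.withDensity (rayleighDensity (π * lam j)) :=
    fun j => map_eq_withDensity_rayleighDensity (hmeas j) (ha j) (hcdf j)
  set T := Finset.univ.erase i
  set c : Fin K → ℝ := fun j => τ i / τ j
  have hevent : {ω | ∀ j, j ≠ i → τ i * R i ω ≤ τ j * R j ω}
      = {ω | ∀ j ∈ T, c j * R i ω ≤ R j ω} := by
    ext ω
    simp only [mem_ofPred_eq, T, c, Finset.mem_erase, Finset.mem_univ, and_true,
      div_mul_eq_mul_div, div_le_iff₀ (hτ _), mul_comm (R _ ω)]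
  have hsum : π * lam i + ∑ j ∈ T, π * lam j * c j ^ 2 = π * ∑ j, τ i ^ 2 / τ j ^ 2 * lam j := by
    rw [← Finset.add_sum_erase _ _ (Finset.mem_univ i), mul_add, Finset.mul_sum,
      div_self (pow_pos (hτ i) 2).ne', one_mul]
    congr 1
    refine Finset.sum_congr rfl fun j _ => ?_
    simp only [c, div_pow]
    ring
  rw [hevent, hindep.measure_forall_mul_le_eq_div hmeas ha hlaw (Finset.notMem_erase i _)
    fun j _ => (div_pos (hτ i) (hτ j)).le, hsum, mul_div_mul_left _ _ pi_ne_zero]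

/-- For `K` independent tiers with nearest-point distances `R_j`
(distributed as the nearest-point distance of a homogeneous PPP of intensity `λ_j`,
i.e. with CDF `1 - exp(-π λ_j r²)`), and positive association weights `τ_j`, the
probability that tier `i` minimizes the weighted distance is
`λ_i / (Σ_j (τ_i²/τ_j²) λ_j)`. -/
theorem stmt1
    {Ω : Type*} [MeasureSpace Ω] [IsProbabilityMeasure (ℙ : Measure Ω)]
    {K : ℕ} (hK : 0 < K)
    (lam τ : Fin K → ℝ) (hlam : ∀ j, 0 < lam j) (hτ : ∀ j, 0 < τ j)
    (R : Fin K → Ω → ℝ)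
    (hmeas : ∀ j, Measurable (R j))
    (hindep : iIndepFun R ℙ)
    (hcdf : ∀ j, ∀ r : ℝ, 0 ≤ r →
      ℙ {ω | R j ω ≤ r} = ENNReal.ofReal (1 - Real.exp (-(π * lam j * r ^ 2))))
    (i : Fin K) :
    ℙ {ω | ∀ j, j ≠ i → τ i * R i ω ≤ τ j * R j ω}
      = ENNReal.ofReal (lam i / ∑ j, (τ i) ^ 2 / (τ j) ^ 2 * lam j) :=
  stmt1_general lam τ hlam hτ R hmeas hindep hcdf i
end

section
/- With the same setup, conditioned on the event {τ_i R_i ≤ τ_j R_j ∀ j ≠ i}, the serving distance R^(i) = R_i has distribution F_{R^(i)}(r) = 1 - exp(-π λ̄_i r²), where λ̄_i = Σ_{j=1}^K (τ_i²/τ_j²) λ_j; i.e., the conditional PDF is f_{R^(i)}(r) = 2π λ̄_i r exp(-π λ̄_i r²) for r ≥ 0. -/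
/-!
Only the serving tier's law is needed explicitly: by independence, given `R_i = s` the
association event `A` is `{R_j ≥ τ_i s / τ_j for all j ≠ i}`, of probability
`exp (-π (λ̄_i - λ_i) s²)`. Against the Rayleigh density `2π λ_i s exp (-π λ_i s²)` of `R_i`
this yields `λ_i / λ̄_i` times the Rayleigh density with parameter `π λ̄_i`, so
`P(A ∩ {R_i ≤ r}) = (λ_i / λ̄_i) (1 - exp (-π λ̄_i r²))`; letting `r → ∞` gives
`P(A) = λ_i / λ̄_i`, and dividing gives the conditional law.
-/

open MeasureTheory ProbabilityTheory Real Set Filter Topology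
open scoped ENNReal

theorem hasDerivAt_one_sub_exp_neg_mul_sq (c r : ℝ) :
    HasDerivAt (fun u : ℝ => 1 - exp (-(c * u ^ 2))) (2 * c * r * exp (-(c * r ^ 2))) r := by
  have h : HasDerivAt (fun u : ℝ => -(c * u ^ 2)) (-(c * (2 * r))) r := by
    simpa [Pi.neg_def] using ((hasDerivAt_pow 2 r).const_mul c).neg
  refine (h.exp.const_sub 1).congr_deriv ?_
  ring

theorem integral_two_mul_mul_exp_neg_mul_sq (c r : ℝ) :
    ∫ s in (0 : ℝ)..r, 2 * c * s * exp (-(c * s ^ 2)) = 1 - exp (-(c * r ^ 2)) := by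
  rw [intervalIntegral.integral_eq_sub_of_hasDerivAt
    (fun s _ => hasDerivAt_one_sub_exp_neg_mul_sq c s)
    ((by fun_prop : Continuous _).intervalIntegrable _ _)]
  simp

theorem tendsto_one_sub_exp_neg_mul_sq {c : ℝ} (hc : 0 < c) :
    Tendsto (fun r : ℝ => 1 - exp (-(c * r ^ 2))) atTop (𝓝 1) := by
  have h : Tendsto (fun r : ℝ => c * r ^ 2) atTop atTop :=
    (tendsto_pow_atTop two_ne_zero).const_mul_atTop hc
  simpa using (tendsto_exp_atBot.comp (tendsto_neg_atTop_atBot.comp h)).const_sub 1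

/-- The Rayleigh law with density `2 c s exp (-c s²)` on `(0, ∞)`, i.e. scale `σ` with
`c = 1 / (2σ²)`; the nearest point of a planar Poisson process of intensity `λ` lies at
distance distributed as `rayleighMeasure (π * λ)`. -/
noncomputable def rayleighMeasure (c : ℝ) : Measure ℝ :=
  (volume.restrict (Ioi 0)).withDensity fun s => ENNReal.ofReal (2 * c * s * exp (-(c * s ^ 2)))

theorem rayleighMeasure_Iic {c r : ℝ} (hc : 0 ≤ c) (hr : 0 ≤ r) :
    rayleighMeasure c (Iic r) = ENNReal.ofReal (1 - exp (-(c * r ^ 2))) := by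
  rw [rayleighMeasure, withDensity_apply _ measurableSet_Iic,
    Measure.restrict_restrict measurableSet_Iic, Iic_inter_Ioi,
    ← ofReal_integral_eq_lintegral_ofReal, ← intervalIntegral.integral_of_le hr,
    integral_two_mul_mul_exp_neg_mul_sq]
  · exact (by fun_prop : Continuous fun s : ℝ => 2 * c * s * exp (-(c * s ^ 2))).integrableOn_Ioc
  · filter_upwards [ae_restrict_mem measurableSet_Ioc] with s hs
    have := hs.1.le
    positivity

theorem rayleighMeasure_Iic_of_nonpos (c : ℝ) {r : ℝ} (hr : r ≤ 0) :
    rayleighMeasure c (Iic r) = 0 := by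
  rw [rayleighMeasure, withDensity_apply _ measurableSet_Iic,
    Measure.restrict_restrict measurableSet_Iic, Iic_inter_Ioi, Ioc_eq_empty (not_lt.2 hr),
    Measure.restrict_empty, lintegral_zero_measure]

theorem isProbabilityMeasure_rayleighMeasure {c : ℝ} (hc : 0 < c) :
    IsProbabilityMeasure (rayleighMeasure c) := by
  constructor
  refine tendsto_nhds_unique (tendsto_measure_Iic_atTop _) ?_
  refine ((ENNReal.tendsto_ofReal (tendsto_one_sub_exp_neg_mul_sq hc)).congr' ?_).trans ?_
  · filter_upwards [eventually_ge_atTop 0] with r hr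
    exact (rayleighMeasure_Iic hc.le hr).symm
  · simp

instance rayleighMeasure.instNullSingletonClass (c : ℝ) :
    NullSingletonClass (rayleighMeasure c) := by
  unfold rayleighMeasure; infer_instance

theorem rayleighMeasure_ae_pos (c : ℝ) : ∀ᵐ s ∂rayleighMeasure c, 0 < s :=
  (withDensity_absolutelyContinuous _ _).ae_le (ae_restrict_mem measurableSet_Ioi)

theorem rayleighMeasure_Ici {c a : ℝ} (hc : 0 < c) (ha : 0 ≤ a) :
    rayleighMeasure c (Ici a) = ENNReal.ofReal (exp (-(c * a ^ 2))) := by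
  have := isProbabilityMeasure_rayleighMeasure hc
  rw [← measure_congr Ioi_ae_eq_Ici, ← compl_Iic, prob_compl_eq_one_sub measurableSet_Iic,
    rayleighMeasure_Iic hc.le ha, ← ENNReal.ofReal_one,
    ← ENNReal.ofReal_sub _ (sub_nonneg.2 (exp_le_one_iff.2 (by nlinarith))), sub_sub_cancel]

theorem withDensity_exp_neg_mul_sq_rayleighMeasure {a b : ℝ} (ha : 0 < a) (hb : 0 ≤ b) :
    (rayleighMeasure a).withDensity (fun s => ENNReal.ofReal (exp (-(b * s ^ 2))))
      = ENNReal.ofReal (a / (a + b)) • rayleighMeasure (a + b) := by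
  rw [rayleighMeasure, rayleighMeasure, ← withDensity_mul _ (by fun_prop) (by fun_prop),
    ← withDensity_smul _ (by fun_prop)]
  congr 1
  ext s
  simp only [Pi.mul_apply, Pi.smul_apply, smul_eq_mul]
  rw [← ENNReal.ofReal_mul' (exp_pos _).le, ← ENNReal.ofReal_mul (by positivity)]
  congr 1
  field_simp
  rw [mul_assoc, ← exp_add]
  ring_nf

theorem map_eq_rayleighMeasure {Ω : Type*} [MeasurableSpace Ω] {μ : Measure Ω}
    [IsProbabilityMeasure μ] {X : Ω → ℝ} (hX : Measurable X) {c : ℝ} (hc : 0 < c)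
    (hcdf : ∀ r, 0 ≤ r → μ {ω | X ω ≤ r} = ENNReal.ofReal (1 - exp (-(c * r ^ 2)))) :
    μ.map X = rayleighMeasure c := by
  refine Measure.ext_of_Iic _ _ fun r => ?_
  rw [Measure.map_apply hX measurableSet_Iic]
  rcases le_total 0 r with hr | hr
  · exact (hcdf r hr).trans (rayleighMeasure_Iic hc.le hr).symm
  · have h0 : μ {ω | X ω ≤ 0} = 0 := by simpa using hcdf 0 le_rfl
    exact (measure_mono_null (fun ω (h : X ω ≤ r) => h.trans hr) h0).trans
      (rayleighMeasure_Iic_of_nonpos c hr).symm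

theorem measure_le_eq_exp_of_cdf {Ω : Type*} [MeasurableSpace Ω] {μ : Measure Ω}
    [IsProbabilityMeasure μ] {X : Ω → ℝ} (hX : Measurable X) {c : ℝ} (hc : 0 < c)
    (hcdf : ∀ r, 0 ≤ r → μ {ω | X ω ≤ r} = ENNReal.ofReal (1 - exp (-(c * r ^ 2))))
    {a : ℝ} (ha : 0 ≤ a) : μ {ω | a ≤ X ω} = ENNReal.ofReal (exp (-(c * a ^ 2))) := by
  rw [← rayleighMeasure_Ici hc ha, ← map_eq_rayleighMeasure hX hc hcdf,
    Measure.map_apply hX measurableSet_Ici]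
  rfl

namespace ProbabilityTheory

theorem IndepFun.measure_preimage_prodMk_inter_eq_setLIntegral {Ω α β : Type*}
    [MeasurableSpace Ω] [MeasurableSpace α] [MeasurableSpace β] {μ : Measure Ω}
    [IsFiniteMeasure μ] {X : Ω → α} {Y : Ω → β} (hXY : IndepFun X Y μ) (hX : Measurable X)
    (hY : Measurable Y) {S : Set (α × β)} (hS : MeasurableSet S) {B : Set α}
    (hB : MeasurableSet B) :
    μ ((fun ω => (X ω, Y ω)) ⁻¹' S ∩ X ⁻¹' B)
      = ∫⁻ x in B, μ (Y ⁻¹' (Prod.mk x ⁻¹' S)) ∂μ.map X := by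
  have hmap := (indepFun_iff_map_prod_eq_prod_map_map hX.aemeasurable hY.aemeasurable).1 hXY
  have hpre : (fun ω => (X ω, Y ω)) ⁻¹' S ∩ X ⁻¹' B
      = (fun ω => (X ω, Y ω)) ⁻¹' (S ∩ B ×ˢ univ) := by
    ext ω; simp
  rw [hpre, ← Measure.map_apply (hX.prodMk hY) (hS.inter (hB.prod MeasurableSet.univ)), hmap,
    ← Measure.restrict_apply' (hB.prod MeasurableSet.univ), ← Measure.prod_restrict,
    Measure.restrict_univ, Measure.prod_apply hS]
  simp_rw [Measure.map_apply hY (measurable_prodMk_left hS)]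

theorem IndepFun.measure_preimage_prodMk_inter_le_eq_of_rayleigh {Ω β : Type*}
    [MeasurableSpace Ω] [MeasurableSpace β] {μ : Measure Ω} [IsFiniteMeasure μ]
    {X : Ω → ℝ} {Y : Ω → β} (hXY : IndepFun X Y μ) (hX : Measurable X) (hY : Measurable Y)
    {a b : ℝ} (ha : 0 < a) (hb : 0 ≤ b) (hlaw : μ.map X = rayleighMeasure a)
    {S : Set (ℝ × β)} (hS : MeasurableSet S)
    (hslice : ∀ s, 0 < s → μ (Y ⁻¹' (Prod.mk s ⁻¹' S)) = ENNReal.ofReal (exp (-(b * s ^ 2))))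
    {r : ℝ} (hr : 0 ≤ r) :
    μ ((fun ω => (X ω, Y ω)) ⁻¹' S ∩ {ω | X ω ≤ r})
      = ENNReal.ofReal (a / (a + b)) * ENNReal.ofReal (1 - exp (-((a + b) * r ^ 2))) := by
  have hslice_ae : ∀ᵐ s ∂rayleighMeasure a, s ∈ Iic r →
      μ (Y ⁻¹' (Prod.mk s ⁻¹' S)) = ENNReal.ofReal (exp (-(b * s ^ 2))) := by
    filter_upwards [rayleighMeasure_ae_pos a] with s hs _ using hslice s hs
  change μ (_ ∩ X ⁻¹' Iic r) = _
  rw [hXY.measure_preimage_prodMk_inter_eq_setLIntegral hX hY hS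
      measurableSet_Iic, hlaw, setLIntegral_congr_fun_ae measurableSet_Iic hslice_ae,
    ← withDensity_apply _ measurableSet_Iic, withDensity_exp_neg_mul_sq_rayleighMeasure ha hb,
    Measure.smul_apply, rayleighMeasure_Iic (by linarith) hr, smul_eq_mul]

theorem iIndepFun.measure_biInter_le_eq_exp {Ω ι : Type*} [MeasurableSpace Ω]
    {μ : Measure Ω} [IsProbabilityMeasure μ] {R : ι → Ω → ℝ} (hindep : iIndepFun R μ)
    (hmeas : ∀ j, Measurable (R j)) {c : ι → ℝ} (hc : ∀ j, 0 < c j)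
    (hcdf : ∀ j r, 0 ≤ r → μ {ω | R j ω ≤ r} = ENNReal.ofReal (1 - exp (-(c j * r ^ 2))))
    (T : Finset ι) {a : ι → ℝ} (ha : ∀ j, 0 ≤ a j) :
    μ (⋂ j ∈ T, {ω | a j ≤ R j ω}) = ENNReal.ofReal (exp (-∑ j ∈ T, c j * a j ^ 2)) := by
  rw [hindep.meas_biInter (s := fun j => {ω | a j ≤ R j ω})
      fun j _ => ⟨Ici (a j), measurableSet_Ici, rfl⟩,
    Finset.prod_congr rfl fun j _ => measure_le_eq_exp_of_cdf (hmeas j) (hc j) (hcdf j) (ha j),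
    ← ENNReal.ofReal_prod_of_nonneg fun j _ => (exp_pos _).le, ← exp_sum, Finset.sum_neg_distrib]

theorem cond_le_eq_of_measure_inter_le_eq {Ω : Type*} [MeasurableSpace Ω]
    {μ : Measure Ω} {A : Set Ω} (hA : MeasurableSet A) {X : Ω → ℝ} {p : ℝ≥0∞} (hp₀ : p ≠ 0)
    (hp : p ≠ ∞) {F : ℝ → ℝ≥0∞} (hF : Tendsto F atTop (𝓝 1))
    (h : ∀ r, 0 ≤ r → μ (A ∩ {ω | X ω ≤ r}) = p * F r) {r : ℝ} (hr : 0 ≤ r) :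
    μ[{ω | X ω ≤ r} | A] = F r := by
  have hmono : Monotone fun r : ℝ => A ∩ {ω | X ω ≤ r} :=
    fun r r' hrr' => inter_subset_inter_right _ fun ω hω => le_trans hω hrr'
  have hunion : ⋃ r : ℝ, A ∩ {ω | X ω ≤ r} = A := by
    ext ω
    simpa using fun _ => ⟨X ω, le_rfl⟩
  have hμA : μ A = p := by
    refine tendsto_nhds_unique (hunion ▸ tendsto_measure_iUnion_atTop hmono) ?_
    have hlim := ENNReal.Tendsto.const_mul hF (Or.inr hp)
    rw [mul_one] at hlim
    refine hlim.congr' ?_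
    filter_upwards [eventually_ge_atTop 0] with r hr
    exact (h r hr).symm
  rw [cond_apply hA, hμA, h r hr, ENNReal.inv_mul_cancel_left hp₀ hp]

end ProbabilityTheory

theorem measure_forall_mul_le_inter_le_eq {Ω : Type*} [MeasureSpace Ω]
    [IsProbabilityMeasure (ℙ : Measure Ω)] {K : ℕ} {lam τ : Fin K → ℝ} (hlam : ∀ j, 0 < lam j)
    (hτ : ∀ j, 0 < τ j) {R : Fin K → Ω → ℝ} (hmeas : ∀ j, Measurable (R j))
    (hindep : iIndepFun R ℙ)
    (hcdf : ∀ j, ∀ r : ℝ, 0 ≤ r →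
      ℙ {ω | R j ω ≤ r} = ENNReal.ofReal (1 - exp (-(π * lam j * r ^ 2))))
    (i : Fin K) {r : ℝ} (hr : 0 ≤ r) :
    ℙ ({ω | ∀ j, j ≠ i → τ i * R i ω ≤ τ j * R j ω} ∩ {ω | R i ω ≤ r})
      = ENNReal.ofReal (lam i / ∑ j, τ i ^ 2 / τ j ^ 2 * lam j)
        * ENNReal.ofReal (1 - exp (-(π * (∑ j, τ i ^ 2 / τ j ^ 2 * lam j) * r ^ 2))) := by
  set T : Finset (Fin K) := {i}ᶜ
  set c := ∑ j ∈ T, τ i ^ 2 / τ j ^ 2 * lam j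
  have hsplit : ∑ j, τ i ^ 2 / τ j ^ 2 * lam j = lam i + c := by
    rw [Fintype.sum_eq_add_sum_compl i, div_self (pow_pos (hτ i) 2).ne', one_mul]
  have hc : 0 ≤ c := Finset.sum_nonneg fun j _ => by have := hlam j; positivity
  let Y : Ω → T → ℝ := fun ω j => R j ω
  have hY : Measurable Y := measurable_pi_lambda _ fun j => hmeas j
  have hXY : IndepFun (R i) Y ℙ := by
    exact (hindep.indepFun_finset {i} T disjoint_compl_right hmeas).comp
      (measurable_pi_apply ⟨i, Finset.mem_singleton_self i⟩) measurable_id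
  let S : Set (ℝ × (T → ℝ)) := {p | ∀ j : T, τ i * p.1 ≤ τ j * p.2 j}
  have hS : MeasurableSet S := by
    simp only [S, ofPred_forall]
    exact .iInter fun j => measurableSet_le (by fun_prop) (by fun_prop)
  have hA : {ω | ∀ j, j ≠ i → τ i * R i ω ≤ τ j * R j ω} = (fun ω => (R i ω, Y ω)) ⁻¹' S := by
    ext ω
    simp [S, Y, T]
  have hslice : ∀ s, 0 < s →
      ℙ (Y ⁻¹' (Prod.mk s ⁻¹' S)) = ENNReal.ofReal (exp (-(π * c * s ^ 2))) := by
    intro s hs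
    have hpre : Y ⁻¹' (Prod.mk s ⁻¹' S) = ⋂ j ∈ T, {ω | τ i * s / τ j ≤ R j ω} := by
      ext ω
      simp [S, Y, div_le_iff₀ (hτ _), mul_comm]
    rw [hpre, hindep.measure_biInter_le_eq_exp hmeas (c := fun j => π * lam j)
      (fun j => mul_pos pi_pos (hlam j)) hcdf T fun j => by have := hτ j; have := hτ i; positivity]
    congr 3
    rw [Finset.mul_sum, Finset.sum_mul]
    refine Finset.sum_congr rfl fun j _ => ?_
    have := (hτ j).ne'
    field_simp
  rw [hA, hXY.measure_preimage_prodMk_inter_le_eq_of_rayleigh (hmeas i) hY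
      (mul_pos pi_pos (hlam i)) (mul_nonneg pi_pos.le hc)
      (map_eq_rayleighMeasure (hmeas i) (mul_pos pi_pos (hlam i)) (hcdf i)) hS hslice hr,
    hsplit, ← mul_add, mul_div_mul_left _ _ pi_ne_zero]

theorem stmt2_general
    {Ω : Type*} [MeasureSpace Ω] [IsProbabilityMeasure (ℙ : Measure Ω)]
    {K : ℕ}
    (lam τ : Fin K → ℝ) (hlam : ∀ j, 0 < lam j) (hτ : ∀ j, 0 < τ j)
    (R : Fin K → Ω → ℝ)
    (hmeas : ∀ j, Measurable (R j))
    (hindep : iIndepFun R ℙ)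
    (hcdf : ∀ j, ∀ r : ℝ, 0 ≤ r →
      ℙ {ω | R j ω ≤ r} = ENNReal.ofReal (1 - Real.exp (-(π * lam j * r ^ 2))))
    (i : Fin K)
    (lamBar : ℝ) (hlamBar : lamBar = ∑ j, (τ i) ^ 2 / (τ j) ^ 2 * lam j) :
    (∀ r : ℝ, 0 ≤ r →
        ProbabilityTheory.cond ℙ {ω | ∀ j, j ≠ i → τ i * R i ω ≤ τ j * R j ω}
            {ω | R i ω ≤ r}
          = ENNReal.ofReal (1 - Real.exp (-(π * lamBar * r ^ 2))))
      ∧ (∀ r : ℝ, 0 ≤ r →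
        HasDerivAt (fun u : ℝ => 1 - Real.exp (-(π * lamBar * u ^ 2)))
          (2 * π * lamBar * r * Real.exp (-(π * lamBar * r ^ 2))) r) := by
  have hlamBar_pos : 0 < lamBar := hlamBar ▸ Finset.sum_pos
    (fun j _ => by have := hlam j; have := hτ i; have := hτ j; positivity) ⟨i, Finset.mem_univ i⟩
  have hA : MeasurableSet {ω | ∀ j, j ≠ i → τ i * R i ω ≤ τ j * R j ω} := by
    simp only [ofPred_forall]
    exact .iInter fun j => .iInter fun _ =>
      measurableSet_le ((hmeas i).const_mul _) ((hmeas j).const_mul _)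
  have hF := ENNReal.tendsto_ofReal (tendsto_one_sub_exp_neg_mul_sq (mul_pos pi_pos hlamBar_pos))
  rw [ENNReal.ofReal_one] at hF
  refine ⟨fun r hr => ?_, fun r _ => ?_⟩
  · refine cond_le_eq_of_measure_inter_le_eq hA
      (ENNReal.ofReal_pos.2 (div_pos (hlam i) hlamBar_pos)).ne' ENNReal.ofReal_ne_top hF
      (fun r hr => ?_) hr
    rw [hlamBar]
    exact measure_forall_mul_le_inter_le_eq hlam hτ hmeas hindep hcdf i hr
  · simpa only [mul_assoc] using hasDerivAt_one_sub_exp_neg_mul_sq (π * lamBar) r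

/-- With `K` independent tiers with nearest-point distances `R_j`
(CDF `1 - exp(-π λ_j r²)`) and positive weights `τ_j`, conditioned on the association
event `{τ_i R_i ≤ τ_j R_j ∀ j ≠ i}`, the serving distance `R_i` has CDF
`1 - exp(-π λ̄_i r²)` where `λ̄_i = Σ_j (τ_i²/τ_j²) λ_j`; i.e. its conditional PDF is
`2π λ̄_i r exp(-π λ̄_i r²)` for `r ≥ 0`. -/
theorem stmt2
    {Ω : Type*} [MeasureSpace Ω] [IsProbabilityMeasure (ℙ : Measure Ω)]
    {K : ℕ} (hK : 0 < K)
    (lam τ : Fin K → ℝ) (hlam : ∀ j, 0 < lam j) (hτ : ∀ j, 0 < τ j)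
    (R : Fin K → Ω → ℝ)
    (hmeas : ∀ j, Measurable (R j))
    (hindep : iIndepFun R ℙ)
    (hcdf : ∀ j, ∀ r : ℝ, 0 ≤ r →
      ℙ {ω | R j ω ≤ r} = ENNReal.ofReal (1 - Real.exp (-(π * lam j * r ^ 2))))
    (i : Fin K)
    (lamBar : ℝ) (hlamBar : lamBar = ∑ j, (τ i) ^ 2 / (τ j) ^ 2 * lam j) :
    (∀ r : ℝ, 0 ≤ r →
        ProbabilityTheory.cond ℙ {ω | ∀ j, j ≠ i → τ i * R i ω ≤ τ j * R j ω}
            {ω | R i ω ≤ r}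
          = ENNReal.ofReal (1 - Real.exp (-(π * lamBar * r ^ 2))))
      ∧ (∀ r : ℝ, 0 ≤ r →
        HasDerivAt (fun u : ℝ => 1 - Real.exp (-(π * lamBar * u ^ 2)))
          (2 * π * lamBar * r * Real.exp (-(π * lamBar * r ^ 2))) r) :=
  stmt2_general lam τ hlam hτ R hmeas hindep hcdf i lamBar hlamBar
end
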